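/- The set ℚ × ℚ ⊆ ℝ² is dense in ℝ² and is line-closed; moreover, for any two distinct points p, q ∈ ℚ × ℚ whose connecting line is not parallel to the diagonal line D = {(x, x) : x ∈ ℝ}, the intersection point of the line pq with D lies in ℚ × ℚ; yet the two intersection points of D with the unit circle {p : dist(p,(0,0)) = 1}, namely (√2/2, √2/2) and (−√2/2, −√2/2), do not lie in ℚ × ℚ. (Hence the intersection points of the line y = x with the unit circle cannot be constructed by straightedge from any collection of rational points on the circle and the given line.) -/

import Mathlib

/-!
Every subfield `K` of `ℝ` contains `ℚ`, so `K × K` is dense; and `K × K` is line-closed because the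
intersection of two non-parallel lines through points of `K × K` is found by Cramer's rule, using
only field operations on the coordinates. The diagonal is the line through `(0, 0)` and `(1, 1)`,
so closure under intersection with it is a special case. Finally `(±√2/2, ±√2/2)` lies on the
unit circle but `√2/2` is irrational.
-/

noncomputable section

/-- The Euclidean plane ℝ². -/
abbrev Pt := EuclideanSpace ℝ (Fin 2)

/-- The point of ℝ² with coordinates (x, y). -/
def pt (x y : ℝ) : Pt := (WithLp.equiv 2 (Fin 2 → ℝ)).symm ![x, y]

/-- The line through two points, as a subset of ℝ². -/
def lineThrough (a b : Pt) : Set Pt := {p : Pt | ∃ t : ℝ, p = a + t • (b - a)}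

/-- The direction of the line `cd` is parallel to the direction of the line `ab`. -/
def ParallelDir (a b c d : Pt) : Prop := ∃ k : ℝ, d - c = k • (b - a)

/-- `S` is line-closed: for points `b1 b2 b3 b4 ∈ S` with `b1 ≠ b2`, `b3 ≠ b4`, if the lines
`b1b2` and `b3b4` are distinct and not parallel, then their intersection point lies in `S`. -/
def LineClosed (S : Set Pt) : Prop :=
  ∀ b1 b2 b3 b4 : Pt, b1 ∈ S → b2 ∈ S → b3 ∈ S → b4 ∈ S → b1 ≠ b2 → b3 ≠ b4 →
    lineThrough b1 b2 ≠ lineThrough b3 b4 → ¬ ParallelDir b1 b2 b3 b4 →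
    ∀ p : Pt, p ∈ lineThrough b1 b2 → p ∈ lineThrough b3 b4 → p ∈ S

/-- `S` is closed under intersections with the set `C`: every point of `C` lying on a line
through two distinct points of `S` belongs to `S`. -/
def IntClosed (S C : Set Pt) : Prop :=
  ∀ b1 b2 : Pt, b1 ∈ S → b2 ∈ S → b1 ≠ b2 → ∀ p ∈ C, p ∈ lineThrough b1 b2 → p ∈ S

/-- `L ⊆ ℝ²` is a line. -/
def IsLine (L : Set Pt) : Prop := ∃ a b : Pt, a ≠ b ∧ L = lineThrough a b

/-- The line `L` is tangent to the circle with center `c` and radius `r`: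
the distance from `c` to `L` equals `r`. -/
def TangentTo (L : Set Pt) (c : Pt) (r : ℝ) : Prop := Metric.infDist c L = r

@[simp] lemma pt_apply_zero (x y : ℝ) : pt x y 0 = x := rfl

@[simp] lemma pt_apply_one (x y : ℝ) : pt x y 1 = y := rfl

lemma pt_ext {p q : Pt} (h0 : p 0 = q 0) (h1 : p 1 = q 1) : p = q := by
  ext i; fin_cases i <;> assumption

lemma dist_pt_zero (x y : ℝ) : dist (pt x y) (pt 0 0) = √(x ^ 2 + y ^ 2) := by
  simp [EuclideanSpace.dist_eq, Fin.sum_univ_two, Real.dist_eq, sq_abs]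

def cross (u v : Pt) : ℝ := u 0 * v 1 - u 1 * v 0

lemma exists_eq_smul_of_cross_eq_zero {u v : Pt} (hu : u ≠ 0) (h : cross u v = 0) :
    ∃ k : ℝ, v = k • u := by
  unfold cross at h
  by_cases h0 : u 0 = 0
  · have h1 : u 1 ≠ 0 := fun h1 => hu (pt_ext (by simpa using h0) (by simpa using h1))
    refine ⟨v 1 / u 1, pt_ext ?_ ?_⟩ <;> simp only [PiLp.smul_apply, smul_eq_mul] <;> field_simp
    linear_combination -h
  · refine ⟨v 0 / u 0, pt_ext ?_ ?_⟩ <;> simp only [PiLp.smul_apply, smul_eq_mul] <;> field_simp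
    linear_combination h

def subfieldPoints (K : Subfield ℝ) : Set Pt := {p | ∀ i, p i ∈ K}

lemma pt_mem_subfieldPoints {K : Subfield ℝ} {x y : ℝ} (hx : x ∈ K) (hy : y ∈ K) :
    pt x y ∈ subfieldPoints K := by
  intro i; fin_cases i <;> assumption

lemma setOf_eq_pt_rat_eq_subfieldPoints :
    {p : Pt | ∃ a b : ℚ, p = pt a b} = subfieldPoints (Rat.castHom ℝ).fieldRange := by
  ext p
  constructor
  · rintro ⟨a, b, rfl⟩
    exact pt_mem_subfieldPoints (RingHom.mem_fieldRange_self _ a) (RingHom.mem_fieldRange_self _ b)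
  · intro hp
    obtain ⟨a, ha⟩ := RingHom.mem_fieldRange.1 (hp 0)
    obtain ⟨b, hb⟩ := RingHom.mem_fieldRange.1 (hp 1)
    exact ⟨a, b, pt_ext ha.symm hb.symm⟩

lemma dense_subfieldPoints (K : Subfield ℝ) : Dense (subfieldPoints K) := by
  have hK : Dense (K : Set ℝ) :=
    Rat.denseRange_cast.mono (Set.range_subset_iff.2 fun q => SubfieldClass.ratCast_mem K q)
  have := (dense_pi Set.univ fun _ _ => hK).preimage
    (EuclideanSpace.equiv (Fin 2) ℝ).toHomeomorph.isOpenMap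
  simpa [subfieldPoints, Set.preimage, Set.mem_univ_pi] using this

lemma cross_mem_subfield {K : Subfield ℝ} {u v : Pt} (hu : u ∈ subfieldPoints K)
    (hv : v ∈ subfieldPoints K) : cross u v ∈ K :=
  sub_mem (mul_mem (hu 0) (hv 1)) (mul_mem (hu 1) (hv 0))

lemma sub_mem_subfieldPoints {K : Subfield ℝ} {p q : Pt} (hp : p ∈ subfieldPoints K)
    (hq : q ∈ subfieldPoints K) : p - q ∈ subfieldPoints K :=
  fun i => sub_mem (hp i) (hq i)

theorem mem_subfieldPoints_of_mem_lineThrough_inter {K : Subfield ℝ} {b1 b2 b3 b4 p : Pt}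
    (h1 : b1 ∈ subfieldPoints K) (h2 : b2 ∈ subfieldPoints K) (h3 : b3 ∈ subfieldPoints K)
    (h4 : b4 ∈ subfieldPoints K) (hne : b1 ≠ b2) (hpar : ¬ ParallelDir b1 b2 b3 b4)
    (hp12 : p ∈ lineThrough b1 b2) (hp34 : p ∈ lineThrough b3 b4) : p ∈ subfieldPoints K := by
  obtain ⟨t, rfl⟩ := hp12
  obtain ⟨s, hs⟩ := hp34
  have hcross : cross (b2 - b1) (b4 - b3) ≠ 0 := fun h =>
    hpar (exists_eq_smul_of_cross_eq_zero (sub_ne_zero.2 hne.symm) h)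
  -- crossing `b1 + t • (b2 - b1) = b3 + s • (b4 - b3)` with `b4 - b3` eliminates `s`
  have ht : t = cross (b3 - b1) (b4 - b3) / cross (b2 - b1) (b4 - b3) := by
    have e0 := congrArg (· 0) hs
    have e1 := congrArg (· 1) hs
    simp only [PiLp.add_apply, PiLp.smul_apply, PiLp.sub_apply, smul_eq_mul] at e0 e1
    rw [eq_div_iff hcross]
    unfold cross
    simp only [PiLp.sub_apply]
    linear_combination (b4 1 - b3 1) * e0 - (b4 0 - b3 0) * e1
  have htK : t ∈ K := ht ▸ div_mem
    (cross_mem_subfield (sub_mem_subfieldPoints h3 h1) (sub_mem_subfieldPoints h4 h3))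
    (cross_mem_subfield (sub_mem_subfieldPoints h2 h1) (sub_mem_subfieldPoints h4 h3))
  exact fun i => add_mem (h1 i) (mul_mem htK (sub_mem_subfieldPoints h2 h1 i))

theorem lineClosed_subfieldPoints (K : Subfield ℝ) : LineClosed (subfieldPoints K) :=
  fun _ _ _ _ h1 h2 h3 h4 hne _ _ hpar _ =>
    mem_subfieldPoints_of_mem_lineThrough_inter h1 h2 h3 h4 hne hpar

lemma setOf_eq_pt_self_subset_lineThrough :
    {w : Pt | ∃ x : ℝ, w = pt x x} ⊆ lineThrough (pt 0 0) (pt 1 1) := by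
  rintro _ ⟨x, rfl⟩
  exact ⟨x, pt_ext (by simp) (by simp)⟩

lemma pt_self_notMem_subfieldPoints_rat {x : ℝ} (hx : Irrational x) :
    pt x x ∉ subfieldPoints (Rat.castHom ℝ).fieldRange := fun h =>
  hx (by simpa using RingHom.mem_fieldRange.1 (h 0))

lemma pt_self_mem_unitCircle_inter_diagonal {x : ℝ} (hx : x ^ 2 = 1 / 2) :
    pt x x ∈ {p : Pt | dist p (pt 0 0) = 1} ∩ {w : Pt | ∃ x : ℝ, w = pt x x} :=
  ⟨show dist _ _ = 1 by rw [dist_pt_zero, ← two_mul, hx]; norm_num, x, rfl⟩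

/-- The intersection of the line y = x with the unit circle cannot be constructed from rational
points: ℚ × ℚ is dense and line-closed, it is closed under intersecting its lines with the
diagonal D = {(x,x)} (when not parallel to it), yet the intersection points ±(√2/2, √2/2) of D
with the unit circle are not in ℚ × ℚ. -/
theorem line_circle_intersection_not_constructible :
    Dense {p : Pt | ∃ a b : ℚ, p = pt a b} ∧
    LineClosed {p : Pt | ∃ a b : ℚ, p = pt a b} ∧
    (∀ p q : Pt, p ∈ {p : Pt | ∃ a b : ℚ, p = pt a b} →
      q ∈ {p : Pt | ∃ a b : ℚ, p = pt a b} → p ≠ q →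
      ¬ ParallelDir p q (pt 0 0) (pt 1 1) →
      ∀ z : Pt, z ∈ lineThrough p q → z ∈ {w : Pt | ∃ x : ℝ, w = pt x x} →
        z ∈ {p : Pt | ∃ a b : ℚ, p = pt a b}) ∧
    pt (Real.sqrt 2 / 2) (Real.sqrt 2 / 2) ∉ {p : Pt | ∃ a b : ℚ, p = pt a b} ∧
    pt (-(Real.sqrt 2 / 2)) (-(Real.sqrt 2 / 2)) ∉ {p : Pt | ∃ a b : ℚ, p = pt a b} ∧
    pt (Real.sqrt 2 / 2) (Real.sqrt 2 / 2) ∈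
      {p : Pt | dist p (pt 0 0) = 1} ∩ {w : Pt | ∃ x : ℝ, w = pt x x} ∧
    pt (-(Real.sqrt 2 / 2)) (-(Real.sqrt 2 / 2)) ∈
      {p : Pt | dist p (pt 0 0) = 1} ∩ {w : Pt | ∃ x : ℝ, w = pt x x} := by
  rw [setOf_eq_pt_rat_eq_subfieldPoints]
  have hirr : Irrational (√2 / 2) := irrational_sqrt_two.div_natCast two_ne_zero
  have hsq : (√2 / 2) ^ 2 = 1 / 2 := by rw [div_pow, Real.sq_sqrt zero_le_two]; norm_num
  refine ⟨dense_subfieldPoints _, lineClosed_subfieldPoints _, ?_,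
    pt_self_notMem_subfieldPoints_rat hirr, pt_self_notMem_subfieldPoints_rat hirr.neg,
    pt_self_mem_unitCircle_inter_diagonal hsq,
    pt_self_mem_unitCircle_inter_diagonal (by rw [neg_sq, hsq])⟩
  intro p q hp hq hne hpar z hzpq hz
  exact mem_subfieldPoints_of_mem_lineThrough_inter hp hq
    (pt_mem_subfieldPoints (zero_mem _) (zero_mem _)) (pt_mem_subfieldPoints (one_mem _) (one_mem _))
    hne hpar hzpq (setOf_eq_pt_self_subset_lineThrough hz)
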